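/- The function f(n) = n² is an isoperimetric function for the standard presentation of any right-angled Artin group: for every cyclically reduced word W of length n representing 1, W is a product of at most n² conjugates of defining commutator relators. -/

import Mathlib

/-- The Artin relator associated to vertices `i, j` with edge label `m i j`
(`(x_i x_j)^{m/2}(x_i⁻¹x_j⁻¹)^{m/2}` for `m` even,
`(x_i x_j)^{(m-1)/2} x_i (x_i⁻¹x_j⁻¹)^{(m-1)/2} x_j⁻¹` for `m` odd). -/
def artinRelator {V : Type} (m : V → V → ℕ) (i j : V) : FreeGroup V :=
  if m i j % 2 = 0 then
    (FreeGroup.of i * FreeGroup.of j) ^ (m i j / 2) *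
      ((FreeGroup.of i)⁻¹ * (FreeGroup.of j)⁻¹) ^ (m i j / 2)
  else
    (FreeGroup.of i * FreeGroup.of j) ^ ((m i j - 1) / 2) * FreeGroup.of i *
      ((FreeGroup.of i)⁻¹ * (FreeGroup.of j)⁻¹) ^ ((m i j - 1) / 2) * (FreeGroup.of j)⁻¹

/-- The set of defining relators of the Artin group `A(Γ)` of a labelled graph,
where `m i j ≠ 0` records that `{i,j}` is an edge with label `m i j`. -/
def artinRels {V : Type} (m : V → V → ℕ) : Set (FreeGroup V) :=
  {r | ∃ i j : V, m i j ≠ 0 ∧ r = artinRelator m i j}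

/-- The support of a word in the free group: the set of generators occurring
in it (equivalently in its inverse). -/
def FreeGroup.supp {V : Type} [DecidableEq V] (w : FreeGroup V) : Set V :=
  {a | a ∈ w.toWord.map Prod.fst}

/-- A reduced word is cyclically reduced iff no cancellation happens in `w * w`. -/
def FreeGroup.IsCyclicallyReduced' {V : Type} [DecidableEq V] (w : FreeGroup V) : Prop :=
  (w * w).toWord.length = 2 * w.toWord.length

/-- The list of syllables (maximal blocks `x^α`) of a reduced word. -/
def FreeGroup.syllables {V : Type} [DecidableEq V] (w : FreeGroup V) : List V :=
  (w.toWord.map Prod.fst).destutter (· ≠ ·)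

/-- The syllable (free-product) length `‖w‖` of a reduced word. -/
def FreeGroup.syllableLength {V : Type} [DecidableEq V] (w : FreeGroup V) : ℕ :=
  w.syllables.length

/-- The number `‖w‖ₓ` of syllables of the generator `x` in a reduced word `w`. -/
def FreeGroup.syllableCount {V : Type} [DecidableEq V] (w : FreeGroup V) (x : V) : ℕ :=
  w.syllables.count x

/-- The defining relators of the right-angled Artin group of a simple graph `G`. -/
def raagRels {V : Type} (G : SimpleGraph V) : Set (FreeGroup V) :=
  {r | ∃ i j : V, G.Adj i j ∧
    r = FreeGroup.of i * FreeGroup.of j * (FreeGroup.of i)⁻¹ * (FreeGroup.of j)⁻¹}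

set_option linter.unusedSectionVars false

namespace RaagNF

open FreeGroup

variable {V : Type} [DecidableEq V] (G : SimpleGraph V)

/-- One swap of adjacent commuting letters. -/
def Step (l l' : List (V × Bool)) : Prop :=
  ∃ (u v : List (V × Bool)) (p q : V × Bool),
    G.Adj p.1 q.1 ∧ l = u ++ p :: q :: v ∧ l' = u ++ q :: p :: v

/-- Shuffle equivalence. -/
def Equi : List (V × Bool) → List (V × Bool) → Prop := Relation.ReflTransGen (Step G)

/-- The word contains a pair `x^s … x^{-s}` with everything in between adjacent to `x`. -/
def CanCancel (w : List (V × Bool)) : Prop :=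
  ∃ (x : V) (s : Bool) (u mid v : List (V × Bool)),
    w = u ++ (x, s) :: (mid ++ (x, !s) :: v) ∧ ∀ p ∈ mid, G.Adj x p.1

/-- The letter `x^{-s}` can be shuffled to the front of `l`. -/
def Cond (x : V) (s : Bool) (l : List (V × Bool)) : Prop :=
  ∃ u v, l = u ++ (x, !s) :: v ∧ ∀ p ∈ u, G.Adj x p.1

theorem append_split {α : Type*} {u v A B : List α} {m : α} (h : u ++ v = A ++ m :: B) :
    (∃ w, u = A ++ m :: w ∧ B = w ++ v) ∨ (∃ w, A = u ++ w ∧ v = w ++ m :: B) := by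
  rcases List.append_eq_append_iff.1 h with ⟨w, hw1, hw2⟩ | ⟨w, hw1, hw2⟩
  · exact Or.inr ⟨w, hw1, hw2⟩
  · cases w with
    | nil => exact Or.inr ⟨[], by simpa using hw1.symm, by simpa using hw2.symm⟩
    | cons c t =>
        obtain ⟨rfl, hB⟩ : m = c ∧ B = t ++ v := by
          simpa using hw2
        exact Or.inl ⟨t, hw1, hB⟩

theorem cond_unique {x : V} {s : Bool} {u₁ v₁ u₂ v₂ : List (V × Bool)}
    (h : u₁ ++ (x, s) :: v₁ = u₂ ++ (x, s) :: v₂)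
    (h₁ : ∀ p ∈ u₁, G.Adj x p.1) (h₂ : ∀ p ∈ u₂, G.Adj x p.1) : u₁ = u₂ ∧ v₁ = v₂ := by
  rcases append_split (u := u₁) (v := (x, s) :: v₁) h with ⟨w, hw1, _⟩ | ⟨w, hw1, hw2⟩
  · exact absurd rfl (h₁ (x, s) (by simp [hw1])).ne
  · cases w with
    | nil =>
        refine ⟨by simpa using hw1.symm, ?_⟩
        simpa using hw2
    | cons c t =>
        obtain rfl : (x, s) = c := by
          simpa using congrArg (fun l => l.head?) hw2
        exact absurd rfl (h₂ (x, s) (by simp [hw1])).ne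

open Classical in
noncomputable def act (x : V) (s : Bool) (l : List (V × Bool)) : List (V × Bool) :=
  if h : Cond G x s l then h.choose ++ h.choose_spec.choose else (x, s) :: l

theorem act_del {x : V} {s : Bool} {l u v : List (V × Bool)}
    (hl : l = u ++ (x, !s) :: v) (hu : ∀ p ∈ u, G.Adj x p.1) :
    act G x s l = u ++ v := by
  have hc : Cond G x s l := ⟨u, v, hl, hu⟩
  rw [act, dif_pos hc]
  obtain ⟨e1, e2⟩ := hc.choose_spec.choose_spec
  obtain ⟨rfl, rfl⟩ := cond_unique G (e1.symm.trans hl) e2 hu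
  rfl

theorem act_push {x : V} {s : Bool} {l : List (V × Bool)} (h : ¬ Cond G x s l) :
    act G x s l = (x, s) :: l := by rw [act, dif_neg h]

theorem step_symm {l l' : List (V × Bool)} (h : Step G l l') : Step G l' l := by
  obtain ⟨u, v, p, q, hadj, hl, hl'⟩ := h
  exact ⟨u, v, q, p, hadj.symm, hl', hl⟩

theorem equi_symm {l l' : List (V × Bool)} (h : Equi G l l') : Equi G l' l := by
  induction h with
  | refl => exact .refl
  | tail _ hstep ih => exact Relation.ReflTransGen.head (step_symm G hstep) ih

theorem step_length {l l' : List (V × Bool)} (h : Step G l l') : l.length = l'.length := by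
  obtain ⟨u, v, p, q, _, rfl, rfl⟩ := h
  simp

theorem equi_length {l l' : List (V × Bool)} (h : Equi G l l') : l.length = l'.length := by
  induction h with
  | refl => rfl
  | tail _ hstep ih => exact ih.trans (step_length G hstep)

theorem equi_of_eq {l l' : List (V × Bool)} (h : l = l') : Equi G l l' := h ▸ .refl

theorem step_cons {l l' : List (V × Bool)} (p : V × Bool) (h : Step G l l') :
    Step G (p :: l) (p :: l') := by
  obtain ⟨u, v, a, b, hadj, rfl, rfl⟩ := h
  exact ⟨p :: u, v, a, b, hadj, rfl, rfl⟩

theorem equi_cons {l l' : List (V × Bool)} (p : V × Bool) (h : Equi G l l') :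
    Equi G (p :: l) (p :: l') := by
  induction h with
  | refl => exact .refl
  | tail _ hstep ih => exact ih.tail (step_cons G p hstep)

theorem equi_cons_append {x : V} {s : Bool} (u v : List (V × Bool))
    (hu : ∀ p ∈ u, G.Adj x p.1) :
    Equi G ((x, s) :: (u ++ v)) (u ++ (x, s) :: v) := by
  induction u with
  | nil => exact .refl
  | cons p t ih =>
      refine Relation.ReflTransGen.head
        (⟨[], t ++ v, (x, s), p, hu p (by simp), rfl, rfl⟩ : Step G _ _) ?_
      exact equi_cons G p (ih fun q hq => hu q (by simp [hq]))

theorem cancel_cons {p : V × Bool} {l : List (V × Bool)} (h : CanCancel G l) :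
    CanCancel G (p :: l) := by
  obtain ⟨x, s, u, mid, v, rfl, hmid⟩ := h
  exact ⟨x, s, p :: u, mid, v, rfl, hmid⟩

theorem nf_act {x : V} {s : Bool} {l : List (V × Bool)} (h : ¬ CanCancel G l) :
    ¬ CanCancel G (act G x s l) := by
  by_cases hc : Cond G x s l
  · obtain ⟨u, v, hl, hu⟩ := hc
    rw [act_del G hl hu]
    rintro ⟨a, t, u₁, mid, v₁, heq, hmid⟩
    rcases append_split heq with ⟨w, hw1, hw2⟩ | ⟨w, hw1, hw2⟩
    · -- u = u₁ ++ (a,t) :: w,  mid ++ (a,!t) :: v₁ = w ++ v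
      rcases append_split hw2.symm with ⟨w₂, hwa, hwb⟩ | ⟨w₂, hwa, hwb⟩
      · -- w = mid ++ (a,!t) :: w₂,  v₁ = w₂ ++ v : pair inside u
        exact h ⟨a, t, u₁, mid, w₂ ++ (x, !s) :: v, by
          rw [hl, hw1, hwa]; simp, hmid⟩
      · -- mid = w ++ w₂,  v = w₂ ++ (a,!t) :: v₁ : pair spans the deleted letter
        have hax : G.Adj a x := (hu (a, t) (by simp [hw1])).symm
        refine h ⟨a, t, u₁, w ++ (x, !s) :: w₂, v₁, by rw [hl, hw1, hwb]; simp, ?_⟩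
        intro p hp
        rcases List.mem_append.1 hp with hp | hp
        · exact hmid p (by simp [hwa, hp])
        · rcases List.mem_cons.1 hp with rfl | hp
          · exact hax
          · exact hmid p (by simp [hwa, hp])
    · -- u₁ = u ++ w,  v = w ++ (a,t) :: mid ++ (a,!t) :: v₁ : pair inside v
      exact h ⟨a, t, u ++ (x, !s) :: w, mid, v₁, by rw [hl, hw2]; simp, hmid⟩
  · rw [act_push G hc]
    rintro ⟨a, t, u₁, mid, v₁, heq, hmid⟩
    cases u₁ with
    | nil =>
        simp only [List.nil_append, List.cons.injEq, Prod.mk.injEq] at heq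
        obtain ⟨⟨rfl, rfl⟩, rfl⟩ := heq
        exact hc ⟨mid, v₁, rfl, hmid⟩
    | cons p u₁' =>
        simp only [List.cons_append, List.cons.injEq] at heq
        exact h ⟨a, t, u₁', mid, v₁, heq.2, hmid⟩

theorem act_inv {x : V} {s : Bool} {l : List (V × Bool)} (h : ¬ CanCancel G l) :
    Equi G (act G x (!s) (act G x s l)) l := by
  by_cases hc : Cond G x s l
  · obtain ⟨u, v, hl, hu⟩ := hc
    rw [act_del G hl hu]
    have hc2 : ¬ Cond G x (!s) (u ++ v) := by
      rintro ⟨A, B, hAB, hA⟩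
      rw [Bool.not_not] at hAB
      rcases append_split hAB with ⟨w, hw1, _⟩ | ⟨w, hw1, hw2⟩
      · exact absurd rfl (hu (x, s) (by simp [hw1])).ne
      · refine h ⟨x, !s, u, w, B, by rw [hl, hw2]; simp [Bool.not_not], ?_⟩
        intro p hp; exact hA p (by simp [hw1, hp])
    rw [act_push G hc2, hl]
    exact equi_cons_append G u v hu
  · rw [act_push G hc]
    have : act G x (!s) ((x, s) :: l) = [] ++ l :=
      act_del G (u := []) (v := l) (by simp [Bool.not_not]) (by simp)
    rw [this]
    exact .refl

theorem cond_step {l l' : List (V × Bool)} (hstep : Step G l l') {x : V} {s : Bool}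
    (hc : Cond G x s l) : Cond G x s l' := by
  obtain ⟨u, v, p, q, hadj, hl, hl'⟩ := hstep
  obtain ⟨A, B, hAB, hA⟩ := hc
  rw [hl] at hAB
  rcases append_split hAB with ⟨w, hw1, hw2⟩ | ⟨w, hw1, hw2⟩
  · exact ⟨A, w ++ q :: p :: v, by rw [hl', hw1]; simp, hA⟩
  · cases w with
    | nil =>
        obtain ⟨hp, hqv⟩ : p = (x, !s) ∧ q :: v = B := by simpa using hw2
        subst hp
        refine ⟨u ++ [q], v, by rw [hl']; simp, ?_⟩
        intro z hz
        rcases List.mem_append.1 hz with hz | hz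
        · exact hA z (by simp [hw1, hz])
        · obtain rfl : z = q := by simpa using hz
          simpa using hadj
    | cons c w' =>
        obtain ⟨rfl, hw2'⟩ : p = c ∧ q :: v = w' ++ (x, !s) :: B := by simpa using hw2
        cases w' with
        | nil =>
            obtain ⟨hq, hv⟩ : q = (x, !s) ∧ v = B := by simpa using hw2'
            exact ⟨u, p :: v, by rw [hl', hq], fun z hz => hA z (by simp [hw1, hz])⟩
        | cons c₂ w₂ =>
            obtain ⟨rfl, rfl⟩ : q = c₂ ∧ v = w₂ ++ (x, !s) :: B := by simpa using hw2'
            refine ⟨u ++ q :: p :: w₂, B, by rw [hl']; simp, ?_⟩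
            intro z hz
            refine hA z ?_
            rw [hw1]
            simp only [List.mem_append, List.mem_cons] at hz ⊢
            tauto

theorem act_step {l l' : List (V × Bool)} (hstep : Step G l l') (x : V) (s : Bool) :
    Equi G (act G x s l) (act G x s l') := by
  by_cases hc : Cond G x s l
  · obtain ⟨u, v, p, q, hadj, hl, hl'⟩ := hstep
    obtain ⟨A, B, hAB, hA⟩ := hc
    rw [hl] at hAB
    rw [act_del G (hl.trans hAB) hA]
    rcases append_split hAB with ⟨w, hw1, hw2⟩ | ⟨w, hw1, hw2⟩
    · -- hw1 : u = A ++ (x,!s)::w, hw2 : B = w ++ p::q::v : letter inside u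
      rw [act_del G (l := l') (u := A) (v := w ++ q :: p :: v) (by rw [hl', hw1]; simp) hA]
      rw [hw2]
      refine Relation.ReflTransGen.single ⟨A ++ w, v, p, q, hadj, by simp, by simp⟩
    · -- hw1 : A = u ++ w, hw2 : p::q::v = w ++ (x,!s)::B
      cases w with
      | nil =>
          obtain ⟨hp, hB⟩ : p = (x, !s) ∧ q :: v = B := by simpa using hw2
          subst hp
          obtain rfl : A = u := by simpa using hw1
          rw [act_del G (l := l') (u := A ++ [q]) (v := v) (by rw [hl']; simp) ?adj]
          · exact equi_of_eq G (by rw [← hB]; simp)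
          case adj =>
            intro z hz
            rcases List.mem_append.1 hz with hz | hz
            · exact hA z hz
            · obtain rfl : z = q := by simpa using hz
              simpa using hadj
      | cons c w' =>
          obtain ⟨rfl, hw2'⟩ : p = c ∧ q :: v = w' ++ (x, !s) :: B := by simpa using hw2
          cases w' with
          | nil =>
              obtain ⟨hq, hv⟩ : q = (x, !s) ∧ v = B := by simpa using hw2'
              subst hq
              rw [act_del G (l := l') (u := u) (v := p :: v) (by rw [hl']) ?adj]
              · exact equi_of_eq G (by rw [hw1, ← hv]; simp)
              case adj =>
                intro z hz
                exact hA z (by simp [hw1, hz])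
          | cons c₂ w₂ =>
              obtain ⟨rfl, rfl⟩ : q = c₂ ∧ v = w₂ ++ (x, !s) :: B := by simpa using hw2'
              rw [act_del G (l := l') (u := u ++ q :: p :: w₂) (v := B) (by rw [hl']; simp) ?adj]
              · rw [hw1]
                refine Relation.ReflTransGen.single ⟨u, w₂ ++ B, p, q, hadj, by simp, by simp⟩
              case adj =>
                intro z hz
                refine hA z ?_
                rw [hw1]
                simp only [List.mem_append, List.mem_cons] at hz ⊢
                tauto
  · have hc' : ¬ Cond G x s l' := fun c => hc (cond_step G (step_symm G hstep) c)
    rw [act_push G hc, act_push G hc']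
    obtain ⟨u, v, p, q, hadj, rfl, rfl⟩ := hstep
    exact Relation.ReflTransGen.single ⟨(x, s) :: u, v, p, q, hadj, rfl, rfl⟩

theorem equi_act {x : V} {s : Bool} {l l' : List (V × Bool)} (h : Equi G l l') :
    Equi G (act G x s l) (act G x s l') := by
  induction h with
  | refl => exact .refl
  | tail _ hstep ih => exact ih.trans (act_step G hstep x s)

theorem act_comm_del {x y : V} {s t : Bool} {l A m B : List (V × Bool)}
    (hl : l = A ++ (x, !s) :: (m ++ (y, !t) :: B))
    (hA : ∀ p ∈ A, G.Adj x p.1)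
    (hAm : ∀ p ∈ A ++ (x, !s) :: m, G.Adj y p.1) :
    Equi G (act G x s (act G y t l)) (act G y t (act G x s l)) := by
  have h1 : act G x s l = A ++ (m ++ (y, !t) :: B) := act_del G hl hA
  have h2 : act G y t (A ++ (m ++ (y, !t) :: B)) = (A ++ m) ++ B :=
    act_del G (u := A ++ m) (v := B) (by simp) (fun p hp => by
      rcases List.mem_append.1 hp with hp | hp
      · exact hAm p (by simp [hp])
      · exact hAm p (by simp [hp]))
  have h3 : act G y t l = (A ++ (x, !s) :: m) ++ B :=
    act_del G (u := A ++ (x, !s) :: m) (v := B) (by rw [hl]; simp) hAm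
  have h4 : act G x s ((A ++ (x, !s) :: m) ++ B) = A ++ (m ++ B) :=
    act_del G (u := A) (v := m ++ B) (by simp) hA
  rw [h3, h4, h1, h2, List.append_assoc]
  exact .refl

theorem act_comm_aux {x y : V} {s t : Bool} {l : List (V × Bool)} (hxy : G.Adj x y)
    (hcy : ¬ Cond G y t l) :
    Equi G (act G x s (act G y t l)) (act G y t (act G x s l)) := by
  by_cases hcx : Cond G x s l
  · obtain ⟨A, B, hAB, hA⟩ := hcx
    have h1 : act G x s l = A ++ B := act_del G hAB hA
    have hncy : ¬ Cond G y t (A ++ B) := by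
      rintro ⟨P, Q, hPQ, hP⟩
      rcases append_split hPQ with ⟨w, hw1, hw2⟩ | ⟨w, hw1, hw2⟩
      · exact hcy ⟨P, w ++ (x, !s) :: B, by rw [hAB, hw1]; simp, hP⟩
      · refine hcy ⟨A ++ (x, !s) :: w, Q, by rw [hAB, hw2]; simp, ?_⟩
        intro z hz
        rcases List.mem_append.1 hz with hz | hz
        · exact hP z (by simp [hw1, hz])
        · rcases List.mem_cons.1 hz with rfl | hz
          · exact hxy.symm
          · exact hP z (by simp [hw1, hz])
    have h2 : act G y t l = (y, t) :: l := act_push G hcy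
    have hadjA : ∀ z ∈ (y, t) :: A, G.Adj x z.1 := by
      intro z hz
      rcases List.mem_cons.1 hz with rfl | hz
      · exact hxy
      · exact hA z hz
    have h3 : act G x s ((y, t) :: l) = (y, t) :: (A ++ B) := by
      have hdel := act_del G (x := x) (s := s) (l := (y, t) :: l) (u := (y, t) :: A) (v := B)
        (by rw [hAB]; simp) hadjA
      simpa using hdel
    rw [h2, h3, h1, act_push G hncy]
    exact .refl
  · have h2 : act G y t l = (y, t) :: l := act_push G hcy
    have h1 : act G x s l = (x, s) :: l := act_push G hcx
    have h3 : ¬ Cond G x s ((y, t) :: l) := by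
      rintro ⟨P, Q, hPQ, hP⟩
      cases P with
      | nil =>
          obtain ⟨hy, -⟩ : (y, t) = (x, !s) ∧ l = Q := by simpa using hPQ
          exact hxy.ne' (congrArg Prod.fst hy)
      | cons c P' =>
          obtain ⟨rfl, hleq⟩ : (y, t) = c ∧ l = P' ++ (x, !s) :: Q := by simpa using hPQ
          exact hcx ⟨P', Q, hleq, fun z hz => hP z (by simp [hz])⟩
    have h4 : ¬ Cond G y t ((x, s) :: l) := by
      rintro ⟨P, Q, hPQ, hP⟩
      cases P with
      | nil =>
          obtain ⟨hy, -⟩ : (x, s) = (y, !t) ∧ l = Q := by simpa using hPQ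
          exact hxy.ne (congrArg Prod.fst hy)
      | cons c P' =>
          obtain ⟨rfl, hleq⟩ : (x, s) = c ∧ l = P' ++ (y, !t) :: Q := by simpa using hPQ
          exact hcy ⟨P', Q, hleq, fun z hz => hP z (by simp [hz])⟩
    rw [h2, h1, act_push G h3, act_push G h4]
    exact Relation.ReflTransGen.single ⟨[], l, (x, s), (y, t), hxy, rfl, rfl⟩

theorem act_comm {x y : V} {s t : Bool} {l : List (V × Bool)} (hxy : G.Adj x y) :
    Equi G (act G x s (act G y t l)) (act G y t (act G x s l)) := by
  by_cases hcy : Cond G y t l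
  · by_cases hcx : Cond G x s l
    · obtain ⟨A, B, hAB, hA⟩ := hcx
      obtain ⟨P, Q, hPQ, hP⟩ := hcy
      rcases append_split ((hAB.symm.trans hPQ : A ++ (x, !s) :: B = P ++ (y, !t) :: Q))
        with ⟨w, hw1, hw2⟩ | ⟨w, hw1, hw2⟩
      · -- hw1 : A = P ++ (y,!t)::w, hw2 : Q = w ++ (x,!s)::B : y-letter first
        exact equi_symm G (act_comm_del G (x := y) (s := t) (y := x) (t := s)
          (A := P) (m := w) (B := B) (by rw [hPQ, hw2]) hP
          (fun p hp => hA p (by rw [hw1]; exact hp)))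
      · -- hw1 : P = A ++ w, hw2 : (x,!s)::B = w ++ (y,!t)::Q
        cases w with
        | nil =>
            obtain ⟨h1, -⟩ : (x, !s) = (y, !t) ∧ B = Q := by simpa using hw2
            exact absurd (congrArg Prod.fst h1) hxy.ne
        | cons c w' =>
            obtain ⟨hc, hB⟩ : (x, !s) = c ∧ B = w' ++ (y, !t) :: Q := by simpa using hw2
            subst hc
            exact act_comm_del G (A := A) (m := w') (B := Q) (by rw [hAB, hB]) hA
              (fun p hp => hP p (by rw [hw1]; exact hp))
    · exact equi_symm G (act_comm_aux G hxy.symm hcx)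
  · exact act_comm_aux G hxy hcy

/-! ### The action on normal forms -/

def NFL := {l : List (V × Bool) // ¬ CanCancel G l}

instance nfSetoid : Setoid (NFL G) :=
  ⟨fun a b => Equi G a.1 b.1,
    ⟨fun _ => .refl, fun h => equi_symm G h, fun h h' => h.trans h'⟩⟩

abbrev Q := Quotient (nfSetoid G)

noncomputable def actQ (x : V) (s : Bool) : Q G → Q G :=
  Quotient.map (fun a => ⟨act G x s a.1, nf_act G a.2⟩) (fun _ _ h => equi_act G h)

noncomputable def pi (x : V) : Equiv.Perm (Q G) where
  toFun := actQ G x true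
  invFun := actQ G x false
  left_inv := by
    refine fun q => Quotient.inductionOn q fun a => ?_
    refine Quotient.sound ?_
    exact act_inv G (x := x) (s := true) a.2
  right_inv := by
    refine fun q => Quotient.inductionOn q fun a => ?_
    refine Quotient.sound ?_
    exact act_inv G (x := x) (s := false) a.2

theorem pi_rels : ∀ r ∈ raagRels G, FreeGroup.lift (pi G) r = 1 := by
  rintro r ⟨i, j, hij, rfl⟩
  have hcomm : pi G i * pi G j = pi G j * pi G i := by
    ext q
    refine Quotient.inductionOn q fun a => ?_
    exact Quotient.sound (act_comm G (s := true) (t := true) hij)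
  have : FreeGroup.lift (pi G) (FreeGroup.of i * FreeGroup.of j * (FreeGroup.of i)⁻¹ *
      (FreeGroup.of j)⁻¹) = pi G i * pi G j * (pi G i)⁻¹ * (pi G j)⁻¹ := by
    simp [_root_.map_mul, map_inv]
  rw [this, hcomm]
  group

noncomputable def psi : PresentedGroup (raagRels G) →* Equiv.Perm (Q G) :=
  PresentedGroup.toGroup (pi_rels G)

theorem psi_mk (w : FreeGroup V) :
    psi G (PresentedGroup.mk (raagRels G) w) = FreeGroup.lift (pi G) w := rfl

theorem nf_nil : ¬ CanCancel G ([] : List (V × Bool)) := by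
  rintro ⟨x, s, u, mid, v, h, -⟩
  have := congrArg List.length h
  simp at this

theorem nf_tail {p : V × Bool} {l : List (V × Bool)} (h : ¬ CanCancel G (p :: l)) :
    ¬ CanCancel G l := fun hc => h (cancel_cons G hc)

theorem eval_word (l₂ : List (V × Bool)) (h₂ : ¬ CanCancel G l₂) :
    ∀ (l₁ : List (V × Bool)) (h : ¬ CanCancel G (l₁ ++ l₂)),
      FreeGroup.lift (pi G) (FreeGroup.mk l₁) ⟦(⟨l₂, h₂⟩ : NFL G)⟧ = ⟦⟨l₁ ++ l₂, h⟩⟧ := by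
  intro l₁
  induction l₁ with
  | nil =>
      intro h
      rw [← FreeGroup.one_eq_mk, _root_.map_one]
      exact congrArg _ (by exact Quotient.sound (equi_of_eq G rfl))
  | cons p t ih =>
      intro h
      obtain ⟨a, b⟩ := p
      have ht : ¬ CanCancel G (t ++ l₂) := nf_tail G h
      have hsplit : FreeGroup.mk ((a, b) :: t) = FreeGroup.mk [(a, b)] * FreeGroup.mk t := by
        rw [FreeGroup.mul_mk]; rfl
      rw [hsplit, _root_.map_mul, Equiv.Perm.mul_apply, ih ht]
      have hpush : act G a b (t ++ l₂) = (a, b) :: (t ++ l₂) := by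
        refine act_push G ?_
        rintro ⟨u', v', huv, hu'⟩
        exact h ⟨a, b, [], u', v', by simp [huv], hu'⟩
      have hval : ∀ hh, actQ G a b ⟦(⟨t ++ l₂, ht⟩ : NFL G)⟧ = ⟦(⟨(a, b) :: (t ++ l₂), hh⟩ : NFL G)⟧ := by
        intro hh
        refine Quotient.sound ?_
        exact equi_of_eq G (l := act G a b (t ++ l₂)) hpush
      cases b with
      | true =>
          have h1 : FreeGroup.lift (pi G) (FreeGroup.mk [(a, true)]) = pi G a := by
            rw [FreeGroup.lift_mk]; simp
          rw [h1]
          exact hval (by simpa using h)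
      | false =>
          have h1 : FreeGroup.lift (pi G) (FreeGroup.mk [(a, false)]) = (pi G a)⁻¹ := by
            rw [FreeGroup.lift_mk]; simp
          rw [h1]
          exact hval (by simpa using h)

theorem word_problem {W : FreeGroup V} (htriv : PresentedGroup.mk (raagRels G) W = 1)
    (hnc : ¬ CanCancel G W.toWord) : W = 1 := by
  have h1 : FreeGroup.lift (pi G) W = 1 := by
    have := congrArg (psi G) htriv
    rw [_root_.map_one, psi_mk] at this
    exact this
  have hW' : ¬ CanCancel G (W.toWord ++ []) := by simpa using hnc
  have heval := eval_word G [] (nf_nil G) W.toWord hW'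
  rw [FreeGroup.mk_toWord, h1] at heval
  have hequi : Equi G ([] : List (V × Bool)) (W.toWord ++ []) := Quotient.exact heval
  have hlen := equi_length G hequi
  simp only [List.append_nil, List.length_nil] at hlen
  have : W.toWord = [] := List.eq_nil_of_length_eq_zero hlen.symm
  rw [← FreeGroup.mk_toWord (x := W), this, ← FreeGroup.one_eq_mk]

/-! ### Areas: products of conjugates of relators -/

def IsRelConj (c : FreeGroup V) : Prop :=
  ∃ f r, r ∈ raagRels G ∧ (c = f * r * f⁻¹ ∨ c = f * r⁻¹ * f⁻¹)

theorem isRelConj_conj {c : FreeGroup V} (g : FreeGroup V) (h : IsRelConj G c) :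
    IsRelConj G (g * c * g⁻¹) := by
  obtain ⟨f, r, hr, hc | hc⟩ := h
  · exact ⟨g * f, r, hr, Or.inl (by rw [hc]; group)⟩
  · exact ⟨g * f, r, hr, Or.inr (by rw [hc]; group)⟩

theorem mk_rel_eq_one {r : FreeGroup V} (hr : r ∈ raagRels G) :
    PresentedGroup.mk (raagRels G) r = 1 :=
  (QuotientGroup.eq_one_iff r).2 (Subgroup.subset_normalClosure hr)

theorem mk_relConj_eq_one {c : FreeGroup V} (h : IsRelConj G c) :
    PresentedGroup.mk (raagRels G) c = 1 := by
  obtain ⟨f, r, hr, hc | hc⟩ := h <;>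
    simp [hc, _root_.map_mul, map_inv, mk_rel_eq_one G hr]

/-- The single-letter word. -/
def ee (x : V) (s : Bool) : FreeGroup V := FreeGroup.mk [(x, s)]

theorem ee_inv (x : V) (s : Bool) : (ee x s)⁻¹ = ee x (!s) := by
  rw [ee, FreeGroup.inv_mk]
  exact congrArg FreeGroup.mk (by simp [FreeGroup.invRev])

theorem ee_true (x : V) : ee x true = FreeGroup.of x := rfl

theorem ee_false (x : V) : ee x false = (FreeGroup.of x)⁻¹ := by
  rw [← ee_true, ee_inv]
  rfl

theorem comm_isRelConj {x y : V} (hxy : G.Adj x y) (s t : Bool) :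
    IsRelConj G (ee x s * ee y t * (ee x s)⁻¹ * (ee y t)⁻¹) := by
  have hx := ee_true x
  have hy := ee_true y
  have hx' := ee_false x
  have hy' := ee_false y
  cases s <;> cases t
  · -- false false
    refine ⟨(FreeGroup.of x)⁻¹ * (FreeGroup.of y)⁻¹,
      FreeGroup.of x * FreeGroup.of y * (FreeGroup.of x)⁻¹ * (FreeGroup.of y)⁻¹,
      ⟨x, y, hxy, rfl⟩, Or.inl ?_⟩
    rw [hx', hy']; group
  · -- false true
    refine ⟨(FreeGroup.of x)⁻¹,
      FreeGroup.of y * FreeGroup.of x * (FreeGroup.of y)⁻¹ * (FreeGroup.of x)⁻¹,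
      ⟨y, x, hxy.symm, rfl⟩, Or.inl ?_⟩
    rw [hx', hy]; group
  · -- true false
    refine ⟨(FreeGroup.of y)⁻¹,
      FreeGroup.of y * FreeGroup.of x * (FreeGroup.of y)⁻¹ * (FreeGroup.of x)⁻¹,
      ⟨y, x, hxy.symm, rfl⟩, Or.inl ?_⟩
    rw [hx, hy']; group
  · -- true true
    refine ⟨1, FreeGroup.of x * FreeGroup.of y * (FreeGroup.of x)⁻¹ * (FreeGroup.of y)⁻¹,
      ⟨x, y, hxy, rfl⟩, Or.inl ?_⟩
    rw [hx, hy]; group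

theorem prod_conj (g : FreeGroup V) (P : List (FreeGroup V)) :
    (P.map fun c => g * c * g⁻¹).prod = g * P.prod * g⁻¹ := by
  induction P with
  | nil => simp
  | cons c tl ih =>
      simp only [List.map_cons, List.prod_cons, ih]
      group

theorem conj_word (x : V) (s : Bool) :
    ∀ mid : List (V × Bool), (∀ p ∈ mid, G.Adj x p.1) →
      ∃ P : List (FreeGroup V), P.length = mid.length ∧ (∀ c ∈ P, IsRelConj G c) ∧
        ee x s * FreeGroup.mk mid * (ee x s)⁻¹ = P.prod * FreeGroup.mk mid := by
  intro mid
  induction mid with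
  | nil =>
      intro _
      refine ⟨[], rfl, by simp, ?_⟩
      rw [← FreeGroup.one_eq_mk, List.prod_nil]
      group
  | cons p tl ih =>
      intro hadj
      obtain ⟨y, tb⟩ := p
      have hxy : G.Adj x y := hadj (y, tb) (by simp)
      obtain ⟨P, hlen, hconj, heq⟩ := ih (fun q hq => hadj q (by simp [hq]))
      refine ⟨(ee x s * ee y tb * (ee x s)⁻¹ * (ee y tb)⁻¹) ::
        P.map (fun c => ee y tb * c * (ee y tb)⁻¹), by simp [hlen], ?_, ?_⟩
      · intro c hc
        rcases List.mem_cons.1 hc with rfl | hc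
        · exact comm_isRelConj G hxy s tb
        · obtain ⟨c₀, hc₀, rfl⟩ := List.mem_map.1 hc
          exact isRelConj_conj G _ (hconj c₀ hc₀)
      · have hmk : FreeGroup.mk ((y, tb) :: tl) = ee y tb * FreeGroup.mk tl := by
          rw [ee, FreeGroup.mul_mk]; rfl
        have hP : P.prod = ee x s * FreeGroup.mk tl * (ee x s)⁻¹ * (FreeGroup.mk tl)⁻¹ :=
          eq_mul_inv_of_mul_eq heq.symm
        rw [hmk, List.prod_cons, prod_conj, hP]
        group

/-! ### The quadratic area bound -/

theorem area : ∀ (n : ℕ) (W : FreeGroup V), W.toWord.length ≤ n →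
    PresentedGroup.mk (raagRels G) W = 1 →
    ∃ P : List (FreeGroup V), P.length ≤ W.toWord.length ^ 2 ∧ W = P.prod ∧
      ∀ c ∈ P, IsRelConj G c := by
  intro n
  induction n using Nat.strong_induction_on with
  | _ n ih =>
    intro W hlen htriv
    by_cases hone : W = 1
    · exact ⟨[], by simp, by simp [hone], by simp⟩
    have hcc : CanCancel G W.toWord := by
      by_contra hnc
      exact hone (word_problem G htriv hnc)
    obtain ⟨x, s, u, mid, v, hW, hmid⟩ := hcc
    have hfac : W = FreeGroup.mk u * (ee x s * FreeGroup.mk mid * (ee x s)⁻¹) *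
        FreeGroup.mk v := by
      rw [ee_inv]
      conv_lhs => rw [← FreeGroup.mk_toWord (x := W), hW]
      simp [ee, FreeGroup.mul_mk]
    obtain ⟨P, hPlen, hPconj, hPeq⟩ := conj_word G x s mid hmid
    set W' : FreeGroup V := FreeGroup.mk u * FreeGroup.mk mid * FreeGroup.mk v with hW'def
    have hsplit : W = FreeGroup.mk u * P.prod * (FreeGroup.mk u)⁻¹ * W' := by
      have hP : P.prod = ee x s * FreeGroup.mk mid * (ee x s)⁻¹ * (FreeGroup.mk mid)⁻¹ :=
        eq_mul_inv_of_mul_eq hPeq.symm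
      rw [hfac, hW'def, hP]
      group
    have hW'triv : PresentedGroup.mk (raagRels G) W' = 1 := by
      have hPone : PresentedGroup.mk (raagRels G) P.prod = 1 := by
        rw [map_list_prod]
        refine List.prod_eq_one fun g hg => ?_
        obtain ⟨c, hc, rfl⟩ := List.mem_map.1 hg
        exact mk_relConj_eq_one G (hPconj c hc)
      have := htriv
      rw [hsplit, _root_.map_mul, _root_.map_mul, _root_.map_mul, hPone, _root_.map_inv] at this
      simpa using this
    have hW'mk : W' = FreeGroup.mk (u ++ (mid ++ v)) := by
      rw [hW'def, FreeGroup.mul_mk, FreeGroup.mul_mk, List.append_assoc]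
    have hW'len : W'.toWord.length ≤ u.length + mid.length + v.length := by
      rw [hW'mk, FreeGroup.toWord_mk]
      have := (FreeGroup.reduce.red (L := u ++ (mid ++ v))).length_le
      simpa [List.length_append, Nat.add_assoc] using this
    have hWlen : W.toWord.length = u.length + mid.length + v.length + 2 := by
      rw [hW]
      simp [List.length_append]
      omega
    set L : ℕ := u.length + mid.length + v.length with hL
    have hLn : L < n := by omega
    obtain ⟨P', hP'len, hP'eq, hP'conj⟩ := ih L hLn W' hW'len hW'triv
    refine ⟨(P.map fun c => FreeGroup.mk u * c * (FreeGroup.mk u)⁻¹) ++ P', ?_, ?_, ?_⟩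
    · have h1 : P'.length ≤ L ^ 2 := le_trans hP'len (Nat.pow_le_pow_left hW'len 2)
      have h2 : (L + 2) ^ 2 = L ^ 2 + 4 * L + 4 := by ring
      rw [List.length_append, List.length_map, hPlen, hWlen]
      have : u.length + mid.length + v.length = L := rfl
      omega
    · rw [List.prod_append, prod_conj, ← hP'eq, ← hsplit]
    · intro c hc
      rcases List.mem_append.1 hc with hc | hc
      · obtain ⟨c₀, hc₀, rfl⟩ := List.mem_map.1 hc
        exact isRelConj_conj G _ (hPconj c₀ hc₀)
      · exact hP'conj c hc

end RaagNF

private theorem raag_quadratic_isoperimetric_aux {V : Type} [DecidableEq V] (G : SimpleGraph V)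
    (W : FreeGroup V)
    (htriv : PresentedGroup.mk (raagRels G) W = 1) :
    ∃ (k : ℕ) (c f r : Fin k → FreeGroup V),
      k ≤ W.toWord.length ^ 2 ∧
      W = (List.ofFn c).prod ∧
      ∀ i : Fin k, r i ∈ raagRels G ∧
        (c i = f i * r i * (f i)⁻¹ ∨ c i = f i * (r i)⁻¹ * (f i)⁻¹) := by
  obtain ⟨P, hlen, hprod, hconj⟩ := RaagNF.area G W.toWord.length W le_rfl htriv
  have H : ∀ i : Fin P.length, ∃ f r, r ∈ raagRels G ∧
      (P.get i = f * r * f⁻¹ ∨ P.get i = f * r⁻¹ * f⁻¹) :=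
    fun i => hconj (P.get i) (List.get_mem P i)
  choose f r hmem heq using H
  exact ⟨P.length, P.get, f, r, hlen, by rw [hprod, List.ofFn_get], fun i => ⟨hmem i, heq i⟩⟩


/-- `f(n) = n²` is an isoperimetric function for the standard
presentation of any right-angled Artin group: every cyclically reduced word `W` of
length `n` representing `1` is a product of at most `n²` conjugates of defining
commutator relators or their inverses. -/
theorem raag_quadratic_isoperimetric {V : Type} [DecidableEq V] (G : SimpleGraph V)
    (W : FreeGroup V) (hcyc : W.IsCyclicallyReduced')
    (htriv : PresentedGroup.mk (raagRels G) W = 1) :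
    ∃ (k : ℕ) (c f r : Fin k → FreeGroup V),
      k ≤ W.toWord.length ^ 2 ∧
      W = (List.ofFn c).prod ∧
      ∀ i : Fin k, r i ∈ raagRels G ∧
        (c i = f i * r i * (f i)⁻¹ ∨ c i = f i * (r i)⁻¹ * (f i)⁻¹) := by
  exact raag_quadratic_isoperimetric_aux G W htriv
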